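/- arXiv:2601.17294 — 2 statements merged into one kernel-verified Lean document; each statement's English description precedes it below -/
import Mathlib

section
/- Let d ≥ 4 and let X be a finite set of 2-dimensional linear subspaces of ℝ^d that is B_d-invariant. Then the function F_X(x) := ∑_{W∈X} ‖P_W x‖^4 satisfies F_X(gx) = F_X(x) for all g ∈ B_d and x ∈ ℝ^d, and there exist constants α, β ∈ ℝ such that F_X(x) = α·∑_{i=1}^d x_i^4 + β·(∑_{i=1}^d x_i^2)^2 for all x ∈ ℝ^d. -/
open scoped BigOperators

/-- Orthogonal projection onto a subspace `V` of `ℝ^d`, as a linear endomorphism. -/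
noncomputable def proj {d : ℕ} (V : Submodule ℝ (EuclideanSpace ℝ (Fin d))) :
    EuclideanSpace ℝ (Fin d) →ₗ[ℝ] EuclideanSpace ℝ (Fin d) :=
  V.subtype ∘ₗ (V.orthogonalProjection).toLinearMap

/-- `g` is a signed permutation matrix: `g = diag(s)·σ` with `s ∈ {±1}^d` and `σ`
a permutation matrix (the hyperoctahedral group `B_d ⊆ O(d)`). -/
def IsSignedPerm {d : ℕ} (g : Matrix (Fin d) (Fin d) ℝ) : Prop :=
  ∃ (σ : Equiv.Perm (Fin d)) (s : Fin d → ℝ),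
    (∀ i, s i = 1 ∨ s i = -1) ∧ ∀ i j, g i j = if i = σ j then s i else 0

open scoped RealInnerProductSpace

/-!
Write `‖P_W x‖² = ⟪P_W x, x⟫`. Then `F_X(x) = ∑ c_{ijkl} x_i x_j x_k x_l` with
`c_{ijkl} = ∑_{W ∈ X} ⟪P_W e_i, e_j⟫ ⟪P_W e_k, e_l⟫`. A signed permutation `g` is an isometry
with `P_{gW} (g x) = g (P_W x)`, and it permutes `X`, so the quartic form behind `F_X` is
`g`-invariant. In particular `c` is invariant under signed permutations of its indices.
Changing the sign of one coordinate kills every `c_{ijkl}` whose indices do not pair up,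
so `F_X(x) = ∑_{i,k} D_{ik} x_i² x_k²`. Permutation invariance then forces `D` to be constant
on the diagonal and constant off it, which gives the form `α ∑ x_i⁴ + β (∑ x_i²)²`.
-/

theorem Finset.sum_comp_eq_of_injOn_of_mapsTo {α M : Type*} [AddCommMonoid M] (s : Finset α)
    {e : α → α} (he : Set.InjOn e s) (hs : ∀ a ∈ s, e a ∈ s) (f : α → M) :
    ∑ a ∈ s, f (e a) = ∑ a ∈ s, f a :=
  Finset.sum_nbij e hs he ((s.finite_toSet.injOn_iff_bijOn_of_mapsTo hs).mp he).surjOn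
    fun _ _ => rfl

section QuarticSums

variable {ι : Type*} [DecidableEq ι]

def IsSignInvariant (c : ι → ι → ι → ι → ℝ) : Prop :=
  ∀ ε : ι → ℝ, (∀ n, ε n = 1 ∨ ε n = -1) → ∀ i j k l, ε i * ε j * ε k * ε l * c i j k l = c i j k l

variable {c : ι → ι → ι → ι → ℝ}

theorem IsSignInvariant.eq_zero_of_not_paired (hc : IsSignInvariant c) {i j k l : ι}
    (h : ¬((i = j ∧ k = l) ∨ (i = k ∧ j = l) ∨ (i = l ∧ j = k))) : c i j k l = 0 := by
  -- Flipping the sign of coordinate `m` multiplies `c i j k l` by `(-1) ^ #{indices equal to m}`;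
  -- unless the indices pair up, one of `i`, `j`, `k` occurs an odd number of times.
  have flip (m : ι) :=
    hc (fun n => if n = m then -1 else 1) (fun n => by split_ifs <;> simp) i j k l
  have := flip i; have := flip j; have := flip k
  grind

theorem IsSignInvariant.eq_ite (hc : IsSignInvariant c) (i j k l : ι) :
    c i j k l = (if i = j ∧ k = l then c i i k k else 0) +
      (if i = k ∧ j = l ∧ i ≠ j then c i j i j else 0) +
      (if i = l ∧ j = k ∧ i ≠ j then c i j j i else 0) := by
  have := hc.eq_zero_of_not_paired (i := i) (j := j) (k := k) (l := l)
  grind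

variable [Fintype ι]

theorem IsSignInvariant.sum_quartic_eq (hc : IsSignInvariant c) (x : ι → ℝ) :
    ∑ i, ∑ j, ∑ k, ∑ l, x i * x j * x k * x l * c i j k l =
      ∑ i, ∑ k, (c i i k k + if i = k then 0 else c i k i k + c i k k i) * (x i ^ 2 * x k ^ 2) := by
  rw [Finset.sum_congr rfl fun i _ => Finset.sum_congr rfl fun j _ =>
    Finset.sum_congr rfl fun k _ => Finset.sum_congr rfl fun l _ =>
      congrArg (x i * x j * x k * x l * ·) (hc.eq_ite i j k l)]
  simp only [mul_add, Finset.sum_add_distrib, mul_ite, mul_zero, ite_and]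
  simp only [Finset.sum_ite_eq, Finset.sum_ite_irrel, Finset.mem_univ, if_true,
    Finset.sum_const_zero]
  simp only [← Finset.sum_add_distrib]
  refine Finset.sum_congr rfl fun i _ => Finset.sum_congr rfl fun k _ => ?_
  by_cases h : i = k <;> simp only [h, ne_eq, not_true_eq_false, not_false_eq_true, if_true,
    if_false] <;> ring

theorem sum_quadratic_eq_of_diag_offDiag {D : ι → ι → ℝ} {a b : ℝ} (hdiag : ∀ i, D i i = a)
    (hoff : ∀ i k, i ≠ k → D i k = b) (y : ι → ℝ) :
    ∑ i, ∑ k, D i k * (y i * y k) = (a - b) * ∑ i, y i ^ 2 + b * (∑ i, y i) ^ 2 := by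
  have hD : ∀ i k, D i k = b + if i = k then a - b else 0 := by
    intro i k
    split_ifs with h
    · rw [h, hdiag]; ring
    · rw [hoff i k h, add_zero]
  simp only [hD, add_mul, Finset.sum_add_distrib, ite_mul, zero_mul, Finset.sum_ite_eq,
    Finset.mem_univ, if_true]
  rw [sq (∑ i, y i), Finset.sum_mul_sum, Finset.mul_sum, Finset.mul_sum, add_comm]
  congr 1
  · simp only [sq]
  · simp only [Finset.mul_sum]

theorem sum_quadratic_eq_of_perm_invariant {D : ι → ι → ℝ}
    (hD : ∀ σ : Equiv.Perm ι, ∀ i k, D (σ i) (σ k) = D i k) {i₀ i₁ : ι} (h : i₀ ≠ i₁)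
    (y : ι → ℝ) :
    ∑ i, ∑ k, D i k * (y i * y k) =
      (D i₀ i₀ - D i₀ i₁) * ∑ i, y i ^ 2 + D i₀ i₁ * (∑ i, y i) ^ 2 := by
  refine sum_quadratic_eq_of_diag_offDiag (fun i => ?_) (fun i k hik => ?_) y
  · simpa using hD (Equiv.swap i₀ i) i₀ i₀
  · obtain ⟨σ, hσ⟩ := Equiv.Perm.exists_extending_pair ![i₀, i₁] ![i, k]
      (injective_pair_iff_ne.2 h) (injective_pair_iff_ne.2 hik)
    have hσ₀ : σ i₀ = i := hσ 0
    have hσ₁ : σ i₁ = k := hσ 1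
    rw [← hσ₀, ← hσ₁, hD]

end QuarticSums

section SignedPerm

variable {d : ℕ} (σ : Equiv.Perm (Fin d)) (s : Fin d → ℝ)

def signedPermMatrix : Matrix (Fin d) (Fin d) ℝ :=
  Matrix.of fun i j => if i = σ j then s i else 0

theorem IsSignedPerm.exists_eq_signedPermMatrix {g : Matrix (Fin d) (Fin d) ℝ}
    (hg : IsSignedPerm g) :
    ∃ σ s, (∀ i, s i = 1 ∨ s i = -1) ∧ g = signedPermMatrix σ s := by
  obtain ⟨σ, s, hs, h⟩ := hg
  exact ⟨σ, s, hs, Matrix.ext h⟩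

theorem isSignedPerm_signedPermMatrix {s : Fin d → ℝ} (hs : ∀ i, s i = 1 ∨ s i = -1) :
    IsSignedPerm (signedPermMatrix σ s) :=
  ⟨σ, s, hs, fun _ _ => rfl⟩

theorem toEuclideanLin_signedPermMatrix_apply (x : EuclideanSpace ℝ (Fin d)) (m : Fin d) :
    Matrix.toEuclideanLin (signedPermMatrix σ s) x m = s m * x (σ.symm m) := by
  simp [Matrix.toLpLin_apply, Matrix.mulVec, dotProduct, signedPermMatrix,
    ← Equiv.symm_apply_eq]

theorem toEuclideanLin_signedPermMatrix_single (i : Fin d) :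
    Matrix.toEuclideanLin (signedPermMatrix σ s) (EuclideanSpace.single i 1) =
      s (σ i) • EuclideanSpace.single (σ i) 1 := by
  ext m
  simp only [toEuclideanLin_signedPermMatrix_apply, PiLp.single_apply, Equiv.symm_apply_eq,
    PiLp.smul_apply, smul_eq_mul, mul_ite, mul_one, mul_zero]
  split_ifs with h <;> simp [h]

variable {s}

theorem norm_toEuclideanLin_signedPermMatrix (hs : ∀ i, s i = 1 ∨ s i = -1)
    (x : EuclideanSpace ℝ (Fin d)) :
    ‖Matrix.toEuclideanLin (signedPermMatrix σ s) x‖ = ‖x‖ := by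
  have hs' : ∀ m, |s m| = 1 := fun m => by rcases hs m with h | h <;> simp [h]
  simp only [EuclideanSpace.norm_eq, toEuclideanLin_signedPermMatrix_apply, norm_mul,
    Real.norm_eq_abs, hs', one_mul]
  rw [Equiv.sum_comp σ.symm (fun i => |x i| ^ 2)]

noncomputable def signedPermIsometry (hs : ∀ i, s i = 1 ∨ s i = -1) :
    EuclideanSpace ℝ (Fin d) ≃ₗᵢ[ℝ] EuclideanSpace ℝ (Fin d) :=
  LinearIsometry.toLinearIsometryEquiv
    ⟨Matrix.toEuclideanLin (signedPermMatrix σ s), norm_toEuclideanLin_signedPermMatrix σ hs⟩ rfl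

end SignedPerm

section Projection

variable {d : ℕ}

theorem proj_apply (W : Submodule ℝ (EuclideanSpace ℝ (Fin d))) (x : EuclideanSpace ℝ (Fin d)) :
    proj W x = W.starProjection x :=
  rfl

theorem proj_map_apply (φ : EuclideanSpace ℝ (Fin d) ≃ₗᵢ[ℝ] EuclideanSpace ℝ (Fin d))
    (W : Submodule ℝ (EuclideanSpace ℝ (Fin d))) (x : EuclideanSpace ℝ (Fin d)) :
    proj (W.map (φ.toLinearEquiv : EuclideanSpace ℝ (Fin d) →ₗ[ℝ] _)) (φ x) = φ (proj W x) := by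
  simp only [proj_apply, Submodule.starProjection_map_apply, LinearIsometryEquiv.symm_apply_apply]

theorem inner_proj_map (φ : EuclideanSpace ℝ (Fin d) ≃ₗᵢ[ℝ] EuclideanSpace ℝ (Fin d))
    (W : Submodule ℝ (EuclideanSpace ℝ (Fin d))) (u v : EuclideanSpace ℝ (Fin d)) :
    ⟪proj (W.map (φ.toLinearEquiv : EuclideanSpace ℝ (Fin d) →ₗ[ℝ] _)) (φ u), φ v⟫ =
      ⟪proj W u, v⟫ := by
  rw [proj_map_apply, LinearIsometryEquiv.inner_map_map]

theorem norm_proj_sq_eq_inner (W : Submodule ℝ (EuclideanSpace ℝ (Fin d)))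
    (x : EuclideanSpace ℝ (Fin d)) :
    ‖proj W x‖ ^ 2 = ⟪proj W x, x⟫ := by
  rw [← real_inner_self_eq_norm_sq, proj_apply, W.inner_starProjection_left_eq_right,
    ← mul_apply_eq_comp, W.isIdempotentElem_starProjection.eq, real_inner_comm]

end Projection

section QuarticForm

variable {d : ℕ} (X : Finset (Submodule ℝ (EuclideanSpace ℝ (Fin d))))

def IsSignedPermInvariant : Prop :=
  ∀ g : Matrix (Fin d) (Fin d) ℝ, IsSignedPerm g → ∀ W ∈ X, W.map (Matrix.toEuclideanLin g) ∈ X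

theorem inner_proj_eq_sum (W : Submodule ℝ (EuclideanSpace ℝ (Fin d)))
    (x y : EuclideanSpace ℝ (Fin d)) :
    ⟪proj W x, y⟫ = ∑ i, ∑ j, x i * y j *
      ⟪proj W (EuclideanSpace.single i 1), EuclideanSpace.single j 1⟫ := by
  conv_lhs => rw [← (EuclideanSpace.basisFun (Fin d) ℝ).sum_repr x,
    ← (EuclideanSpace.basisFun (Fin d) ℝ).sum_repr y]
  simp only [map_sum, map_smul, sum_inner, inner_sum, inner_smul_left, inner_smul_right,
    EuclideanSpace.basisFun_apply, EuclideanSpace.basisFun_repr, RCLike.conj_to_real]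
  rw [Finset.sum_comm]
  simp only [Finset.mul_sum]
  exact Finset.sum_congr rfl fun _ _ => Finset.sum_congr rfl fun _ _ => by ring

noncomputable def projQuarticForm (u v w z : EuclideanSpace ℝ (Fin d)) : ℝ :=
  ∑ W ∈ X, ⟪proj W u, v⟫ * ⟪proj W w, z⟫

theorem sum_norm_proj_pow_four (x : EuclideanSpace ℝ (Fin d)) :
    ∑ W ∈ X, ‖proj W x‖ ^ 4 = projQuarticForm X x x x x := by
  simp only [projQuarticForm, ← norm_proj_sq_eq_inner, ← pow_add]

theorem projQuarticForm_map (φ : EuclideanSpace ℝ (Fin d) ≃ₗᵢ[ℝ] EuclideanSpace ℝ (Fin d))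
    (hX : ∀ W ∈ X, W.map (φ.toLinearEquiv : EuclideanSpace ℝ (Fin d) →ₗ[ℝ] _) ∈ X)
    (u v w z : EuclideanSpace ℝ (Fin d)) :
    projQuarticForm X (φ u) (φ v) (φ w) (φ z) = projQuarticForm X u v w z := by
  rw [projQuarticForm, ← X.sum_comp_eq_of_injOn_of_mapsTo
    (Submodule.map_injective_of_injective φ.injective).injOn hX]
  simp only [inner_proj_map, projQuarticForm]

theorem projQuarticForm_smul (a b c e : ℝ) (u v w z : EuclideanSpace ℝ (Fin d)) :
    projQuarticForm X (a • u) (b • v) (c • w) (e • z) =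
      a * b * c * e * projQuarticForm X u v w z := by
  simp only [projQuarticForm, map_smul, inner_smul_left, inner_smul_right, Finset.mul_sum,
    RCLike.conj_to_real]
  exact Finset.sum_congr rfl fun _ _ => by ring

noncomputable def quarticCoeff (i j k l : Fin d) : ℝ :=
  projQuarticForm X (EuclideanSpace.single i 1) (EuclideanSpace.single j 1)
    (EuclideanSpace.single k 1) (EuclideanSpace.single l 1)

theorem projQuarticForm_self_eq_sum (x : EuclideanSpace ℝ (Fin d)) :
    projQuarticForm X x x x x =
      ∑ i, ∑ j, ∑ k, ∑ l, x i * x j * x k * x l * quarticCoeff X i j k l := by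
  simp only [quarticCoeff, projQuarticForm, inner_proj_eq_sum _ x x, Finset.mul_sum,
    Finset.sum_mul]
  rw [Finset.sum_comm]
  refine Finset.sum_congr rfl fun i _ => ?_
  rw [Finset.sum_comm]
  refine Finset.sum_congr rfl fun j _ => ?_
  rw [Finset.sum_comm]
  refine Finset.sum_congr rfl fun k _ => ?_
  rw [Finset.sum_comm]
  exact Finset.sum_congr rfl fun l _ => Finset.sum_congr rfl fun W _ => by ring

variable {X}

theorem projQuarticForm_toEuclideanLin (hX : IsSignedPermInvariant X)
    {g : Matrix (Fin d) (Fin d) ℝ} (hg : IsSignedPerm g) (u v w z : EuclideanSpace ℝ (Fin d)) :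
    projQuarticForm X (Matrix.toEuclideanLin g u) (Matrix.toEuclideanLin g v)
      (Matrix.toEuclideanLin g w) (Matrix.toEuclideanLin g z) = projQuarticForm X u v w z := by
  obtain ⟨σ, s, hs, rfl⟩ := hg.exists_eq_signedPermMatrix
  exact projQuarticForm_map X (signedPermIsometry σ hs) (hX _ (isSignedPerm_signedPermMatrix σ hs))
    u v w z

theorem quarticCoeff_signedPerm (hX : IsSignedPermInvariant X) (σ : Equiv.Perm (Fin d))
    {s : Fin d → ℝ} (hs : ∀ i, s i = 1 ∨ s i = -1) (i j k l : Fin d) :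
    s (σ i) * s (σ j) * s (σ k) * s (σ l) * quarticCoeff X (σ i) (σ j) (σ k) (σ l) =
      quarticCoeff X i j k l := by
  rw [quarticCoeff, ← projQuarticForm_smul]
  simp only [← toEuclideanLin_signedPermMatrix_single]
  exact projQuarticForm_toEuclideanLin hX (isSignedPerm_signedPermMatrix σ hs) _ _ _ _

theorem quarticCoeff_perm (hX : IsSignedPermInvariant X) (σ : Equiv.Perm (Fin d))
    (i j k l : Fin d) :
    quarticCoeff X (σ i) (σ j) (σ k) (σ l) = quarticCoeff X i j k l := by
  simpa using quarticCoeff_signedPerm hX σ (s := fun _ => 1) (fun _ => Or.inl rfl) i j k l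

theorem quarticCoeff_isSignInvariant (hX : IsSignedPermInvariant X) :
    IsSignInvariant (quarticCoeff X) :=
  fun _ hε => quarticCoeff_signedPerm hX 1 hε

end QuarticForm

theorem stmt4_general (d : ℕ) (hd : 4 ≤ d)
    (X : Finset (Submodule ℝ (EuclideanSpace ℝ (Fin d))))
    (hinv : ∀ g : Matrix (Fin d) (Fin d) ℝ, IsSignedPerm g →
      ∀ W ∈ X, Submodule.map (Matrix.toEuclideanLin g) W ∈ X) :
    (∀ g : Matrix (Fin d) (Fin d) ℝ, IsSignedPerm g →
      ∀ x : EuclideanSpace ℝ (Fin d),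
        ∑ W ∈ X, ‖proj W (Matrix.toEuclideanLin g x)‖ ^ 4 =
          ∑ W ∈ X, ‖proj W x‖ ^ 4) ∧
    (∃ α β : ℝ, ∀ x : EuclideanSpace ℝ (Fin d),
      ∑ W ∈ X, ‖proj W x‖ ^ 4 =
        α * (∑ i, (x i) ^ 4) + β * (∑ i, (x i) ^ 2) ^ 2) := by
  refine ⟨fun g hg x => ?_, ?_⟩
  · simpa only [sum_norm_proj_pow_four] using projQuarticForm_toEuclideanLin hinv hg x x x x
  · let D : Fin d → Fin d → ℝ := fun i k =>
      quarticCoeff X i i k k + if i = k then 0 else quarticCoeff X i k i k + quarticCoeff X i k k i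
    have hD (σ : Equiv.Perm (Fin d)) (i k : Fin d) : D (σ i) (σ k) = D i k := by
      simp only [D, quarticCoeff_perm hinv, σ.injective.eq_iff]
    let i₀ : Fin d := ⟨0, by omega⟩
    let i₁ : Fin d := ⟨1, by omega⟩
    have h₀₁ : i₀ ≠ i₁ := Fin.ne_of_val_ne zero_ne_one
    refine ⟨D i₀ i₀ - D i₀ i₁, D i₀ i₁, fun x => ?_⟩
    rw [sum_norm_proj_pow_four, projQuarticForm_self_eq_sum,
      (quarticCoeff_isSignInvariant hinv).sum_quartic_eq,
      sum_quadratic_eq_of_perm_invariant hD h₀₁ (fun i => x i ^ 2)]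
    norm_num [← pow_mul]

/-- Lemma: if `X ⊆ G_{2,d}` is `B_d`-invariant, then
`F_X(x) := ∑_{W∈X} ‖P_W x‖⁴` is `B_d`-invariant, and there are `α, β ∈ ℝ` with
`F_X(x) = α ∑ᵢ xᵢ⁴ + β (∑ᵢ xᵢ²)²` for all `x ∈ ℝ^d`. -/
theorem stmt4 (d : ℕ) (hd : 4 ≤ d)
    (X : Finset (Submodule ℝ (EuclideanSpace ℝ (Fin d))))
    (hdim : ∀ W ∈ X, Module.finrank ℝ W = 2)
    (hinv : ∀ g : Matrix (Fin d) (Fin d) ℝ, IsSignedPerm g →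
      ∀ W ∈ X, Submodule.map (Matrix.toEuclideanLin g) W ∈ X) :
    (∀ g : Matrix (Fin d) (Fin d) ℝ, IsSignedPerm g →
      ∀ x : EuclideanSpace ℝ (Fin d),
        ∑ W ∈ X, ‖proj W (Matrix.toEuclideanLin g x)‖ ^ 4 =
          ∑ W ∈ X, ‖proj W x‖ ^ 4) ∧
    (∃ α β : ℝ, ∀ x : EuclideanSpace ℝ (Fin d),
      ∑ W ∈ X, ‖proj W x‖ ^ 4 =
        α * (∑ i, (x i) ^ 4) + β * (∑ i, (x i) ^ 2) ^ 2) :=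
  stmt4_general d hd X hinv
end

section
/- Let d ≥ 4 be an odd integer and let t ≥ 2 be an integer. Then there exists no family X = {V_1, …, V_N} of N ≥ 2 pairwise distinct 2-dimensional linear subspaces of ℝ^d that is equi-isoclinic and an equal-weight tight t-fusion frame (i.e. no EITFF_t exists on G_{2,d} for d odd). -/
/-!
Restricting the identity `∑ i, ‖P_i x‖ ^ (2t) = A ‖x‖ ^ (2t)` to a line `x + z v` gives an
identity of polynomials in `z`. Comparing the `z²`-coefficients and summing over an orthonormal
basis of directions `v` (that is, taking a Laplacian) shows that a tight `t`-fusion frame of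
rank-`r` subspaces of an `n`-dimensional space is a tight `(t - 1)`-fusion frame too, its constant
multiplied by `(n + 2t - 2) / (r + 2t - 2)`. So an `EITFF_t` on `G_{2,d}` is a tight `2`-fusion
frame with some constant `B` and a tight `1`-fusion frame with constant `C = B (d + 2) / 4`.

For `i ≠ j` the compression of `P_i` to `V_j` has trace `2y` and squared Hilbert–Schmidt norm
`2y²`, so it is `y • id`, and `‖P_i x‖² = y` for every unit vector `x ∈ V_j`. Evaluating both
frame identities at such an `x` gives `B = 1 + (N - 1) y²` and `C = 1 + (N - 1) y`; taking the
trace of the second identity gives `2N = C d`. For `d ≠ 2` these force `d² = 4N`, which is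
impossible for odd `d`.
-/

open scoped BigOperators

/-- `tr(P_V P_W)`. -/
noncomputable def trP {d : ℕ} (V W : Submodule ℝ (EuclideanSpace ℝ (Fin d))) : ℝ :=
  LinearMap.trace ℝ (EuclideanSpace ℝ (Fin d)) (proj V ∘ₗ proj W)

/-- `tr((P_V P_W)²)`. -/
noncomputable def trP2 {d : ℕ} (V W : Submodule ℝ (EuclideanSpace ℝ (Fin d))) : ℝ :=
  LinearMap.trace ℝ (EuclideanSpace ℝ (Fin d)) ((proj V ∘ₗ proj W) ∘ₗ (proj V ∘ₗ proj W))

open Polynomial Module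
open scoped RealInnerProductSpace

namespace Polynomial
variable {R : Type*} [CommRing R]

theorem coeff_mul_quadratic_one (f : R[X]) (p a b : R) :
    (f * (C p + C a * X + C b * X ^ 2)).coeff 1 = f.coeff 1 * p + f.coeff 0 * a := by
  simp [mul_add, ← mul_assoc, coeff_mul_X_pow']

theorem coeff_mul_quadratic_two (f : R[X]) (p a b : R) :
    (f * (C p + C a * X + C b * X ^ 2)).coeff 2 =
      f.coeff 2 * p + f.coeff 1 * a + f.coeff 0 * b := by
  simp only [mul_add, ← mul_assoc, coeff_add, coeff_mul_C, coeff_mul_X, coeff_mul_X_pow', le_refl,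
    if_true, Nat.sub_self]

theorem coeff_zero_quadratic_pow (p a b : R) (m : ℕ) :
    ((C p + C a * X + C b * X ^ 2) ^ m).coeff 0 = p ^ m := by
  simp [coeff_zero_eq_eval_zero]

theorem coeff_one_quadratic_pow (p a b : R) (m : ℕ) :
    ((C p + C a * X + C b * X ^ 2) ^ (m + 1)).coeff 1 = (m + 1) * p ^ m * a := by
  induction m with
  | zero => simp [coeff_C]
  | succ m ih =>
    rw [pow_succ, coeff_mul_quadratic_one, ih, coeff_zero_quadratic_pow]
    push_cast
    ring

theorem coeff_two_quadratic_pow (p a b : R) (m : ℕ) :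
    ((C p + C a * X + C b * X ^ 2) ^ (m + 2)).coeff 2 =
      (m + 2) * p ^ (m + 1) * b + (m + 2).choose 2 * p ^ m * a ^ 2 := by
  induction m with
  | zero =>
    rw [pow_two, coeff_mul_quadratic_two]
    simp only [coeff_add, coeff_C_succ, coeff_mul_X, add_zero, coeff_C_mul, coeff_X_pow,
      ↓reduceIte, mul_one, zero_add, coeff_C, OfNat.one_ne_ofNat, mul_zero, mul_coeff_zero, coeff_X,
      one_ne_zero, OfNat.zero_ne_ofNat, Nat.cast_zero, pow_one, Nat.choose_self, Nat.cast_one,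
      pow_zero, one_mul]
    ring
  | succ m ih =>
    rw [pow_succ, coeff_mul_quadratic_two, ih, coeff_one_quadratic_pow, coeff_zero_quadratic_pow,
      Nat.choose_succ_succ (m + 2), Nat.choose_one_right]
    push_cast
    ring

end Polynomial

theorem Matrix.diag_eq_of_trace_eq_of_sum_sq_eq {ι : Type*} [Fintype ι] (M : Matrix ι ι ℝ)
    {y : ℝ} (h1 : M.trace = Fintype.card ι * y)
    (h2 : ∑ a, ∑ b, M a b ^ 2 = Fintype.card ι * y ^ 2) (a : ι) : M a a = y := by
  have hle : ∑ a, (M a a - y) ^ 2 ≤ 0 :=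
    calc ∑ a, (M a a - y) ^ 2 = ∑ a, M a a ^ 2 - 2 * y * M.trace + Fintype.card ι * y ^ 2 := by
          simp only [sub_sq, Finset.sum_add_distrib, Finset.sum_sub_distrib, ← Finset.sum_mul,
            ← Finset.mul_sum, Matrix.trace, Matrix.diag_apply, Finset.sum_const,
            Finset.card_univ, nsmul_eq_mul]
          ring
      _ ≤ ∑ a, ∑ b, M a b ^ 2 - 2 * y * M.trace + Fintype.card ι * y ^ 2 := by
          gcongr with a
          exact Finset.single_le_sum (f := fun b => M a b ^ 2) (fun _ _ => sq_nonneg _)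
            (Finset.mem_univ a)
      _ = 0 := by rw [h1, h2]; ring
  have hzero := (Finset.sum_eq_zero_iff_of_nonneg fun a _ => sq_nonneg (M a a - y)).1
    (le_antisymm hle (Finset.sum_nonneg fun a _ => sq_nonneg _)) a (Finset.mem_univ a)
  rwa [sq_eq_zero_iff, sub_eq_zero] at hzero

variable {E : Type*} [NormedAddCommGroup E] [InnerProductSpace ℝ E]

namespace Submodule

variable (K : Submodule ℝ E) [K.HasOrthogonalProjection]

theorem inner_starProjection_self (x : E) :
    ⟪K.starProjection x, x⟫ = ‖K.starProjection x‖ ^ 2 := by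
  simpa using K.re_inner_starProjection_eq_normSq x

theorem norm_starProjection_add_smul_sq (x v : E) (z : ℝ) :
    ‖K.starProjection (x + z • v)‖ ^ 2 =
      ‖K.starProjection x‖ ^ 2 + 2 * ⟪K.starProjection x, v⟫ * z +
        ‖K.starProjection v‖ ^ 2 * z ^ 2 := by
  rw [map_add, map_smul, norm_add_sq_real, inner_smul_right, norm_smul, mul_pow, Real.norm_eq_abs,
    sq_abs, ← inner_starProjection_left_eq_right,
    starProjection_eq_self_iff.mpr (K.starProjection_apply_mem x)]
  ring

noncomputable def normSqLine (x v : E) : ℝ[X] :=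
  C (‖K.starProjection x‖ ^ 2) + C (2 * ⟪K.starProjection x, v⟫) * X +
    C (‖K.starProjection v‖ ^ 2) * X ^ 2

theorem eval_normSqLine (x v : E) (z : ℝ) :
    (K.normSqLine x v).eval z = ‖K.starProjection (x + z • v)‖ ^ 2 := by
  rw [norm_starProjection_add_smul_sq]
  simp [normSqLine]

end Submodule

namespace OrthonormalBasis

variable {ι κ : Type*} [Fintype ι] [Fintype κ]

theorem norm_starProjection_sq {K : Submodule ℝ E} [K.HasOrthogonalProjection]
    (c : OrthonormalBasis ι ℝ K) (u : E) :
    ‖K.starProjection u‖ ^ 2 = ∑ a, ⟪(c a : E), u⟫ ^ 2 := by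
  rw [Submodule.starProjection_apply, Submodule.norm_coe, ← c.sum_sq_inner_right]
  exact Finset.sum_congr rfl fun a _ => by
    rw [Submodule.inner_orthogonalProjectionOnto_eq_of_mem_left]

theorem sum_norm_starProjection_sq (b : OrthonormalBasis κ ℝ E) (K : Submodule ℝ E)
    [FiniteDimensional ℝ K] : ∑ k, ‖K.starProjection (b k)‖ ^ 2 = finrank ℝ K := by
  rw [Finset.sum_congr rfl fun k _ => (stdOrthonormalBasis ℝ K).norm_starProjection_sq (b k),
    Finset.sum_comm]
  simp [b.sum_sq_inner_left, Submodule.norm_coe, OrthonormalBasis.norm_eq_one]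

theorem sum_coeff_two_normSqLine_pow (b : OrthonormalBasis κ ℝ E) (K : Submodule ℝ E)
    [FiniteDimensional ℝ K] (x : E) (t : ℕ) :
    ∑ k, ((K.normSqLine x (b k)) ^ (t + 2)).coeff 2 =
      (t + 2) * (finrank ℝ K + 2 * t + 2) * (‖K.starProjection x‖ ^ 2) ^ (t + 1) := by
  simp only [Submodule.normSqLine, coeff_two_quadratic_pow, Finset.sum_add_distrib,
    ← Finset.mul_sum, mul_pow, b.sum_norm_starProjection_sq, b.sum_sq_inner_left,
    Nat.cast_choose_two]
  push_cast
  ring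

theorem trace_comp_starProjection [FiniteDimensional ℝ E] {K : Submodule ℝ E}
    (c : OrthonormalBasis ι ℝ K) (f : E →ₗ[ℝ] E) :
    LinearMap.trace ℝ E (f ∘ₗ K.starProjection) = ∑ a, ⟪(c a : E), f (c a)⟫ := by
  rw [show (K.starProjection : E →ₗ[ℝ] E) = K.subtype ∘ₗ (K.orthogonalProjectionOnto : E →ₗ[ℝ] K)
    from rfl, ← LinearMap.comp_assoc, LinearMap.trace_comp_comm', LinearMap.trace_eq_sum_inner _ c]
  simp

theorem norm_starProjection_sq_eq_of_trace [FiniteDimensional ℝ E] {V W : Submodule ℝ E}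
    (c : OrthonormalBasis ι ℝ W) {y : ℝ}
    (h1 : LinearMap.trace ℝ E ((V.starProjection : E →ₗ[ℝ] E) ∘ₗ W.starProjection) =
      Fintype.card ι * y)
    (h2 : LinearMap.trace ℝ E (((V.starProjection : E →ₗ[ℝ] E) ∘ₗ W.starProjection) ∘ₗ
      ((V.starProjection : E →ₗ[ℝ] E) ∘ₗ W.starProjection)) = Fintype.card ι * y ^ 2)
    (a : ι) : ‖V.starProjection (c a)‖ ^ 2 = y := by
  let M : Matrix ι ι ℝ := Matrix.of fun a b => ⟪(c b : E), V.starProjection (c a)⟫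
  have hM1 : M.trace = Fintype.card ι * y := by
    rw [← h1, c.trace_comp_starProjection]
    rfl
  have hM2 : ∑ a, ∑ b, M a b ^ 2 = Fintype.card ι * y ^ 2 := by
    rw [← h2, ← LinearMap.comp_assoc, c.trace_comp_starProjection]
    refine Finset.sum_congr rfl fun a _ => ?_
    simp only [M, Matrix.of_apply, LinearMap.comp_apply, ContinuousLinearMap.coe_coe]
    rw [← V.inner_starProjection_left_eq_right, real_inner_comm, W.inner_starProjection_self,
      c.norm_starProjection_sq]
  rw [← M.diag_eq_of_trace_eq_of_sum_sq_eq hM1 hM2 a]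
  simp only [M, Matrix.of_apply]
  rw [real_inner_comm, V.inner_starProjection_self]

end OrthonormalBasis

variable [FiniteDimensional ℝ E] {ι : Type*} [Fintype ι]

def IsTightFusionFrame (V : ι → Submodule ℝ E) (t : ℕ) (A : ℝ) : Prop :=
  ∀ x : E, ∑ i, ‖(V i).starProjection x‖ ^ (2 * t) = A * ‖x‖ ^ (2 * t)

namespace IsTightFusionFrame

variable {V : ι → Submodule ℝ E} {r t : ℕ} {A : ℝ}

theorem of_succ (hV : ∀ i, finrank ℝ (V i) = r) (ht : 1 ≤ t)
    (h : IsTightFusionFrame V (t + 1) A) :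
    IsTightFusionFrame V t (A * (finrank ℝ E + 2 * t) / (r + 2 * t)) := by
  obtain ⟨s, rfl⟩ := Nat.exists_eq_add_of_le' ht
  intro x
  have hline : ∀ v, ∑ i, (V i).normSqLine x v ^ (s + 2) =
      C A * (⊤ : Submodule ℝ E).normSqLine x v ^ (s + 2) := fun v =>
    Polynomial.funext fun z => by
      simp only [eval_finsetSum, eval_mul, eval_C, eval_pow, Submodule.eval_normSqLine,
        Submodule.starProjection_top, ContinuousLinearMap.id_apply, ← pow_mul]
      exact h (x + z • v)
  have hsum := Finset.sum_congr rfl fun k (_ : k ∈ Finset.univ) =>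
    congrArg (coeff · 2) (hline (stdOrthonormalBasis ℝ E k))
  simp only [finsetSum_coeff, coeff_C_mul] at hsum
  rw [Finset.sum_comm, ← Finset.mul_sum] at hsum
  simp only [OrthonormalBasis.sum_coeff_two_normSqLine_pow, hV, finrank_top,
    Submodule.starProjection_top, ContinuousLinearMap.id_apply, ← Finset.mul_sum,
    ← pow_mul] at hsum
  rw [div_mul_eq_mul_div, eq_div_iff (by positivity)]
  refine mul_left_cancel₀ (by positivity : (s + 2 : ℝ) ≠ 0) ?_
  push_cast
  linear_combination hsum

theorem exists_two (hV : ∀ i, finrank ℝ (V i) = r) (ht : 2 ≤ t)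
    (h : IsTightFusionFrame V t A) : ∃ B, IsTightFusionFrame V 2 B := by
  obtain ⟨s, rfl⟩ := Nat.exists_eq_add_of_le' ht
  clear ht
  induction s generalizing A with
  | zero => exact ⟨A, h⟩
  | succ s ih => exact ih (h.of_succ hV (by omega))

theorem card_mul_eq (hV : ∀ i, finrank ℝ (V i) = r) (h : IsTightFusionFrame V 1 A) :
    Fintype.card ι * r = A * finrank ℝ E := by
  have hsum := Finset.sum_congr rfl fun k (_ : k ∈ Finset.univ) => h (stdOrthonormalBasis ℝ E k)
  rw [Finset.sum_comm, ← Finset.mul_sum] at hsum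
  simpa [(stdOrthonormalBasis ℝ E).sum_norm_starProjection_sq, hV, OrthonormalBasis.norm_eq_one]
    using hsum

theorem eq_one_add_mul_pow (h : IsTightFusionFrame V t A) {j : ι} {x : E} (hxV : x ∈ V j)
    (hx : ‖x‖ = 1) {y : ℝ} (hy : ∀ i ≠ j, ‖(V i).starProjection x‖ ^ 2 = y) :
    A = 1 + (Fintype.card ι - 1) * y ^ t := by
  classical
  have hx' := h x
  rw [Fintype.sum_eq_add_sum_compl j, Submodule.starProjection_eq_self_iff.mpr hxV, hx,
    Finset.sum_congr rfl fun i hi => by rw [pow_mul, hy i (by simpa using hi)]] at hx'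
  have hcard : 1 ≤ Fintype.card ι := Fintype.card_pos_iff.2 ⟨j⟩
  simpa [Finset.card_compl, Nat.cast_sub hcard] using hx'.symm

end IsTightFusionFrame

theorem sq_eq_four_mul_of_tight_equations {d N y B C : ℝ} (hd : d ≠ 2) (hN : N ≠ 0)
    (hB : B = 1 + (N - 1) * y ^ 2) (hC : C = 1 + (N - 1) * y) (hBC : 4 * C = B * (d + 2))
    (hNC : 2 * N = C * d) : d ^ 2 = 4 * N := by
  have hC0 : C ≠ 0 := by
    rintro rfl
    exact hN (by linarith)
  -- `(N - 1) B = (N - 1) + (C - 1)²` eliminates `y`, then `hNC` eliminates `N`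
  have key : C * (d - 2) * (d - 2 * C) = 0 := by
    linear_combination (-2) * ((N - 1) * hBC + (d + 2) * (N - 1) * hB -
      (d + 2) * (C - 1 + (N - 1) * y) * hC) + (4 * C - d - 2) * hNC
  have hd2C : d = 2 * C := by
    simpa [hC0, sub_ne_zero.2 hd, sub_eq_zero] using key
  linear_combination d * hd2C - 2 * hNC

theorem stmt19_general (d t : ℕ) (hodd : Odd d) (ht : 2 ≤ t) :
    ¬ ∃ (N : ℕ) (V : Fin N → Submodule ℝ (EuclideanSpace ℝ (Fin d))),
      2 ≤ N ∧ Function.Injective V ∧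
      (∀ i, Module.finrank ℝ (V i) = 2) ∧
      (∃ y : ℝ, y ∈ Set.Icc (0 : ℝ) 1 ∧ ∀ i j, i ≠ j →
        trP (V i) (V j) = 2 * y ∧ trP2 (V i) (V j) = 2 * y ^ 2) ∧
      (∃ A : ℝ, 0 < A ∧ ∀ x : EuclideanSpace ℝ (Fin d),
        ∑ i, ‖proj (V i) x‖ ^ (2 * t) = A * ‖x‖ ^ (2 * t)) := by
  rintro ⟨N, V, hN, -, hrank, ⟨y, -, hiso⟩, ⟨A, -, hframe⟩⟩
  obtain ⟨B, hB⟩ := IsTightFusionFrame.exists_two hrank ht hframe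
  have hB1 : IsTightFusionFrame V 1 (B * (d + 2) / 4) := by
    convert hB.of_succ hrank le_rfl using 2 <;> norm_num
  let j : Fin N := ⟨0, by omega⟩
  let c := (stdOrthonormalBasis ℝ (V j)).reindex (finCongr (hrank j))
  have hy : ∀ i ≠ j, ‖(V i).starProjection (c 0)‖ ^ 2 = y := fun i hij =>
    c.norm_starProjection_sq_eq_of_trace
      (by rw [Fintype.card_fin]; exact_mod_cast (hiso i j hij).1)
      (by rw [Fintype.card_fin]; exact_mod_cast (hiso i j hij).2) 0
  have h2 := hB.eq_one_add_mul_pow (c 0).2 (c.norm_eq_one 0) hy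
  have h1 := hB1.eq_one_add_mul_pow (c 0).2 (c.norm_eq_one 0) hy
  have hcard := hB1.card_mul_eq hrank
  simp only [Fintype.card_fin, pow_one, finrank_euclideanSpace_fin] at h1 h2 hcard
  have hd : (d : ℝ) ≠ 2 := by
    exact_mod_cast fun h : d = 2 => Nat.not_odd_iff_even.2 (h ▸ even_two) hodd
  have hsq : (d : ℝ) ^ 2 = 4 * N :=
    sq_eq_four_mul_of_tight_equations hd (by exact_mod_cast (show N ≠ 0 by omega)) h2 h1
      (by ring) (by linear_combination hcard)
  have hsqN : d ^ 2 = 4 * N := by exact_mod_cast hsq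
  exact Nat.not_odd_iff_even.2 ⟨2 * N, by omega⟩ (hsqN ▸ hodd.pow)

/-- Corollary: for odd `d ≥ 4` and `t ≥ 2`, there is no `EITFF_t` on
`G_{2,d}`: no family of `N ≥ 2` pairwise distinct 2-dimensional subspaces of `ℝ^d`
that is equi-isoclinic and an equal-weight tight `t`-fusion frame. -/
theorem stmt19 (d t : ℕ) (hd : 4 ≤ d) (hodd : Odd d) (ht : 2 ≤ t) :
    ¬ ∃ (N : ℕ) (V : Fin N → Submodule ℝ (EuclideanSpace ℝ (Fin d))),
      2 ≤ N ∧ Function.Injective V ∧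
      (∀ i, Module.finrank ℝ (V i) = 2) ∧
      (∃ y : ℝ, y ∈ Set.Icc (0 : ℝ) 1 ∧ ∀ i j, i ≠ j →
        trP (V i) (V j) = 2 * y ∧ trP2 (V i) (V j) = 2 * y ^ 2) ∧
      (∃ A : ℝ, 0 < A ∧ ∀ x : EuclideanSpace ℝ (Fin d),
        ∑ i, ‖proj (V i) x‖ ^ (2 * t) = A * ‖x‖ ^ (2 * t)) :=
  stmt19_general d t hodd ht
end
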